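/- arXiv:math/0501099 — 5 statements merged into one kernel-verified Lean document; each statement's English description precedes it below -/
import Mathlib

section
/- Let (W,S) be a finite Coxeter system with set of reflections T and A ⊆ T. Then: (a) A itself is A-admissible; (b) a subset I ⊆ A is A-admissible if and only if A \ I is A-admissible; (c) {w ∈ W : D_A(w) = A} = {w₀} if and only if S ⊆ A, where w₀ is the longest element. -/
/-!
Following Tits, let `W` act on `W × ℤˣ` with the simple reflection `s` acting by
`(t, ε) ↦ (s t s, -ε if t = s else ε)`; the braid relations hold because along the
alternating word of length `2m` the reflections met repeat with period `m`. The sign cocycle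
`η = inversionSign` of this action detects inversions: for a reflection `t`, `ℓ(w t) < ℓ(w)`
iff `η(w, t) = -1`. Since the longest element `w₀` inverts every reflection, the cocycle
identity gives `η(w₀ u, t) = -η(u, t)`, so `D_A(w₀ w) = A \ D_A(w)`. This gives (a) and (b).
For (c), if a simple `s ∉ A` then `D_A(s) = ∅`, so `w₀ s ≠ w₀` also has `D_A(w₀ s) = A`;
conversely an element having every simple reflection as a right descent is `w₀`, because
`w₀⁻¹ w` then has no right descent.
-/

open Equiv Finset

section SignedConj

open scoped Classical in
noncomputable def eqSign {α : Type*} (t u : α) : ℤˣ := if t = u then -1 else 1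

theorem eqSign_self {α : Type*} (t : α) : eqSign t t = -1 := if_pos rfl

theorem eqSign_of_ne {α : Type*} {t u : α} (h : t ≠ u) : eqSign t u = 1 := if_neg h

variable {G : Type*} [Group G]

theorem eqSign_conj (g t u : G) : eqSign (g * t * g⁻¹) u = eqSign t (g⁻¹ * u * g) := by
  unfold eqSign
  congr 1
  exact propext ⟨fun h => by simp [← h, mul_assoc], fun h => by simp [h, mul_assoc]⟩

noncomputable def signedConj (a : G) : Perm (G × ℤˣ) :=
  (MulAut.conj a).toEquiv.prodShear fun t => Equiv.mulLeft (eqSign t a)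

theorem signedConj_apply (a t : G) (ε : ℤˣ) :
    signedConj a (t, ε) = (a * t * a⁻¹, eqSign t a * ε) := rfl

theorem mul_inv_eq_of_mul_self_eq_one {a b : G} (ha : a * a = 1) (hb : b * b = 1) :
    (a * b)⁻¹ = b * a := by
  rw [mul_inv_rev, inv_eq_of_mul_eq_one_right ha, inv_eq_of_mul_eq_one_right hb]

theorem signedConj_mul_pow_apply {a b : G} (ha : a * a = 1) (hb : b * b = 1) (k : ℕ) (t : G)
    (ε : ℤˣ) : ((signedConj a * signedConj b) ^ k) (t, ε) =
      ((a * b) ^ k * t * ((a * b) ^ k)⁻¹,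
        (∏ d ∈ range (2 * k), eqSign t ((b * a) ^ d * b)) * ε) := by
  have hinv (l : ℕ) : ((a * b) ^ l)⁻¹ = (b * a) ^ l := by
    rw [← inv_pow, mul_inv_eq_of_mul_self_eq_one ha hb]
  have hsemi (l : ℕ) : b * (a * b) ^ l = (b * a) ^ l * b :=
    ((show SemiconjBy b (a * b) (b * a) by simp [SemiconjBy, mul_assoc]).pow_right l).eq
  induction k with
  | zero => simp
  | succ k ih =>
    set p := a * b
    set t' := p ^ k * t * (p ^ k)⁻¹
    have hb' : b⁻¹ = b := inv_eq_of_mul_eq_one_right hb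
    have h_even : eqSign t' b = eqSign t ((b * a) ^ (2 * k) * b) := by
      rw [eqSign_conj, hinv, mul_assoc, hsemi, ← mul_assoc, ← pow_add, ← two_mul]
    have h_odd : eqSign (b * t' * b⁻¹) a = eqSign t ((b * a) ^ (2 * k + 1) * b) := by
      rw [eqSign_conj, eqSign_conj, hinv, hb', show 2 * k + 1 = k + 1 + k by ring, pow_add,
        pow_succ]
      simp only [mul_assoc, hsemi]
    rw [pow_succ', Perm.mul_apply, ih, Perm.mul_apply, signedConj_apply, signedConj_apply,
      h_odd, h_even, Nat.mul_succ, prod_range_succ, prod_range_succ]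
    ext
    · simp only [t', p, pow_succ', mul_inv_rev, mul_assoc]
    · simp only
      ac_rfl

theorem signedConj_mul_pow_eq_one {a b : G} (ha : a * a = 1) (hb : b * b = 1) {m : ℕ}
    (hm : (a * b) ^ m = 1) : (signedConj a * signedConj b) ^ m = 1 := by
  have hm' : (b * a) ^ m = 1 := by
    rw [← mul_inv_eq_of_mul_self_eq_one ha hb, inv_pow, hm, inv_one]
  ext ⟨t, ε⟩ : 1
  rw [signedConj_mul_pow_apply ha hb, hm, Perm.one_apply, two_mul, prod_range_add]
  simp [pow_add, hm', Int.units_mul_self]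

end SignedConj

namespace CoxeterSystem

variable {B W : Type*} [Group W] {M : CoxeterMatrix B} (cs : CoxeterSystem M W)

theorem isLiftable_signedConj_simple : M.IsLiftable fun i => signedConj (cs.simple i) :=
  fun i j => signedConj_mul_pow_eq_one (cs.simple_mul_simple_self i)
    (cs.simple_mul_simple_self j) (cs.simple_mul_simple_pow i j)

noncomputable def signedConjAction : W →* Perm (W × ℤˣ) :=
  cs.lift ⟨_, cs.isLiftable_signedConj_simple⟩

theorem signedConjAction_simple (i : B) :
    cs.signedConjAction (cs.simple i) = signedConj (cs.simple i) :=
  cs.lift_apply_simple cs.isLiftable_signedConj_simple i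

noncomputable def inversionSign (w t : W) : ℤˣ := (cs.signedConjAction w (t, 1)).2

theorem signedConjAction_apply (w t : W) (ε : ℤˣ) :
    cs.signedConjAction w (t, ε) = (w * t * w⁻¹, cs.inversionSign w t * ε) := by
  induction w using cs.simple_induction_left generalizing t ε with
  | one => simp [inversionSign]
  | mul_simple_left w i ih =>
    have h (δ : ℤˣ) : cs.signedConjAction (cs.simple i * w) (t, δ) =
        (cs.simple i * (w * t * w⁻¹) * (cs.simple i)⁻¹,
          eqSign (w * t * w⁻¹) (cs.simple i) * (cs.inversionSign w t * δ)) := by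
      rw [map_mul, Perm.mul_apply, ih, signedConjAction_simple, signedConj_apply]
    have h₁ : cs.inversionSign (cs.simple i * w) t =
        eqSign (w * t * w⁻¹) (cs.simple i) * cs.inversionSign w t := by
      have h₁ := congrArg Prod.snd (h 1)
      rw [mul_one] at h₁
      exact h₁
    rw [h, h₁, mul_inv_rev]
    simp only [mul_assoc]

theorem inversionSign_mul (u v t : W) :
    cs.inversionSign (u * v) t = cs.inversionSign v t * cs.inversionSign u (v * t * v⁻¹) := by
  have h := cs.signedConjAction_apply (u * v) t 1
  rw [map_mul, Perm.mul_apply, signedConjAction_apply, signedConjAction_apply] at h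
  simpa [mul_comm] using (congrArg Prod.snd h).symm

theorem inversionSign_simple (i : B) (t : W) :
    cs.inversionSign (cs.simple i) t = eqSign t (cs.simple i) := by
  simp [inversionSign, signedConjAction_simple, signedConj_apply]

@[simp]
theorem inversionSign_one (t : W) : cs.inversionSign 1 t = 1 := by
  simp [inversionSign]

theorem inversionSign_conj_self (g t : W) :
    cs.inversionSign (g * t * g⁻¹) (g * t * g⁻¹) = cs.inversionSign t t := by
  have h_cancel := cs.inversionSign_mul g g⁻¹ (g * t * g⁻¹)
  rw [mul_inv_cancel, inversionSign_one, inv_inv, show g⁻¹ * (g * t * g⁻¹) * g = t by group]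
    at h_cancel
  rw [cs.inversionSign_mul (g * t), show g⁻¹ * (g * t * g⁻¹) * g⁻¹⁻¹ = t by group,
    cs.inversionSign_mul g t t, mul_inv_cancel_right, mul_left_comm, ← h_cancel, mul_one]

theorem inversionSign_wordProd_of_not_mem_rightInvSeq {ω : List B} {t : W}
    (h : t ∉ cs.rightInvSeq ω) : cs.inversionSign (cs.wordProd ω) t = 1 := by
  induction ω with
  | nil => simp [inversionSign]
  | cons i ω ih =>
    rw [rightInvSeq, List.mem_cons, not_or] at h
    rw [wordProd_cons, inversionSign_mul, ih h.2, inversionSign_simple, eqSign_conj,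
      eqSign_of_ne h.1, one_mul]

theorem inversionSign_self {t : W} (ht : cs.IsReflection t) : cs.inversionSign t t = -1 := by
  obtain ⟨g, i, rfl⟩ := ht
  rw [inversionSign_conj_self, inversionSign_simple, eqSign_self]

theorem length_mul_lt_of_inversionSign_eq_neg_one {w t : W} (h : cs.inversionSign w t = -1) :
    cs.length (w * t) < cs.length w := by
  obtain ⟨ω, hω, rfl⟩ := cs.exists_isReduced w
  by_cases hmem : t ∈ cs.rightInvSeq ω
  · exact (cs.isRightInversion_of_mem_rightInvSeq hω hmem).2
  · rw [inversionSign_wordProd_of_not_mem_rightInvSeq cs hmem] at h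
    exact absurd h (by decide)

theorem length_mul_lt_iff_inversionSign_eq_neg_one {w t : W} (ht : cs.IsReflection t) :
    cs.length (w * t) < cs.length w ↔ cs.inversionSign w t = -1 := by
  refine ⟨fun hlt => (Int.units_eq_one_or _).resolve_left fun h => ?_,
    cs.length_mul_lt_of_inversionSign_eq_neg_one⟩
  have h_neg : cs.inversionSign (w * t) t = -1 := by
    rw [inversionSign_mul, inversionSign_self cs ht, mul_inv_cancel_right, h, mul_one]
  have h_lt := cs.length_mul_lt_of_inversionSign_eq_neg_one h_neg
  rw [mul_assoc, ht.mul_self, mul_one] at h_lt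
  exact lt_asymm hlt h_lt

def descentsIn (A : Set W) (w : W) : Set W := {t ∈ A | cs.length (w * t) < cs.length w}

@[simp]
theorem descentsIn_one (A : Set W) : cs.descentsIn A 1 = ∅ := by
  simp [descentsIn]

theorem descentsIn_simple_of_not_mem {A : Set W} {i : B} (hi : cs.simple i ∉ A) :
    cs.descentsIn A (cs.simple i) = ∅ := by
  refine Set.eq_empty_of_forall_notMem fun t ⟨htA, hlt⟩ => hi ?_
  rw [length_simple, Nat.lt_one_iff, length_eq_zero_iff] at hlt
  rwa [eq_inv_of_mul_eq_one_right hlt, inv_simple] at htA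

section Longest

variable {cs} {w₀ : W}

theorem length_longest_mul_lt (hw₀ : ∀ w, cs.length w ≤ cs.length w₀) {t : W}
    (ht : cs.IsReflection t) :
    cs.length (w₀ * t) < cs.length w₀ :=
  (hw₀ _).lt_of_ne (ht.length_mul_left_ne w₀)

theorem length_longest_mul_mul_lt_iff (hw₀ : ∀ w, cs.length w ≤ cs.length w₀) {t : W}
    (ht : cs.IsReflection t) (u : W) :
    cs.length (w₀ * u * t) < cs.length (w₀ * u) ↔ ¬ cs.length (u * t) < cs.length u := by
  have h_conj : cs.inversionSign w₀ (u * t * u⁻¹) = -1 :=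
    (cs.length_mul_lt_iff_inversionSign_eq_neg_one (ht.conj u)).1
      (length_longest_mul_lt hw₀ (ht.conj u))
  rw [cs.length_mul_lt_iff_inversionSign_eq_neg_one ht,
    cs.length_mul_lt_iff_inversionSign_eq_neg_one ht, inversionSign_mul, h_conj]
  rcases Int.units_eq_one_or (cs.inversionSign u t) with h | h <;> simp [h]

theorem eq_longest_of_forall_isRightDescent (hw₀ : ∀ w, cs.length w ≤ cs.length w₀) {w : W}
    (h : ∀ i, cs.IsRightDescent w i) : w = w₀ := by
  by_contra hne
  obtain ⟨i, hi⟩ := cs.exists_rightDescent_of_ne_one (w := w₀⁻¹ * w)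
    (by rwa [ne_eq, inv_mul_eq_one, eq_comm])
  have h_flip := (length_longest_mul_mul_lt_iff hw₀ (cs.isReflection_simple i) (w₀⁻¹ * w)).1
  rw [mul_inv_cancel_left] at h_flip
  exact h_flip (h i) hi

theorem descentsIn_longest_mul (hw₀ : ∀ w, cs.length w ≤ cs.length w₀) {A : Set W}
    (hA : ∀ t ∈ A, cs.IsReflection t) (w : W) :
    cs.descentsIn A (w₀ * w) = A \ cs.descentsIn A w := by
  ext t
  simp only [descentsIn, Set.mem_sdiff, Set.mem_ofPred_eq]
  refine and_congr_right fun htA => ?_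
  rw [length_longest_mul_mul_lt_iff hw₀ (hA t htA), and_iff_right htA]

end Longest

end CoxeterSystem

theorem admissible_props_finite_general {B W : Type*} [Group W] {M : CoxeterMatrix B}
    (cs : CoxeterSystem M W) (A : Set W) (hA : ∀ t ∈ A, cs.IsReflection t)
    (w₀ : W) (hw₀ : ∀ w : W, cs.length w ≤ cs.length w₀) :
    (∃ w : W, {t ∈ A | cs.length (w * t) < cs.length w} = A) ∧
      (∀ I : Set W, I ⊆ A →
        ((∃ w : W, {t ∈ A | cs.length (w * t) < cs.length w} = I) ↔
          (∃ w : W, {t ∈ A | cs.length (w * t) < cs.length w} = A \ I))) ∧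
      ({w : W | {t ∈ A | cs.length (w * t) < cs.length w} = A} = {w₀} ↔
        Set.range cs.simple ⊆ A) := by
  show (∃ w, cs.descentsIn A w = A) ∧
    (∀ I ⊆ A, (∃ w, cs.descentsIn A w = I) ↔ ∃ w, cs.descentsIn A w = A \ I) ∧
    ({w | cs.descentsIn A w = A} = {w₀} ↔ Set.range cs.simple ⊆ A)
  have h_longest : cs.descentsIn A w₀ = A := by
    simpa using cs.descentsIn_longest_mul hw₀ hA 1
  refine ⟨⟨w₀, h_longest⟩, fun I hI => ⟨?_, ?_⟩, ⟨?_, ?_⟩⟩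
  · rintro ⟨w, hw⟩
    exact ⟨w₀ * w, (cs.descentsIn_longest_mul hw₀ hA w).trans (congrArg (A \ ·) hw)⟩
  · rintro ⟨w, hw⟩
    refine ⟨w₀ * w, (cs.descentsIn_longest_mul hw₀ hA w).trans ?_⟩
    rw [hw, Set.sdiff_sdiff_cancel_left hI]
  · rintro h_unique _ ⟨i, rfl⟩
    by_contra hi
    have h_mem : w₀ * cs.simple i ∈ {w : W | cs.descentsIn A w = A} := by
      rw [Set.mem_ofPred_eq, cs.descentsIn_longest_mul hw₀ hA,
        cs.descentsIn_simple_of_not_mem hi, Set.sdiff_empty]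
    rw [h_unique, Set.mem_singleton_iff, mul_eq_left] at h_mem
    simpa [h_mem] using cs.length_simple i
  · refine fun hS => Set.eq_singleton_iff_unique_mem.2 ⟨h_longest, fun w hw => ?_⟩
    refine cs.eq_longest_of_forall_isRightDescent hw₀ fun i => ?_
    exact (show cs.simple i ∈ cs.descentsIn A w from hw.symm ▸ hS ⟨i, rfl⟩).2

/-- In a finite Coxeter group: (a) `A` is `A`-admissible;
(b) `I ⊆ A` is `A`-admissible iff `A \ I` is; (c) `{w : D_A(w) = A} = {w₀}` iff `S ⊆ A`. -/
theorem admissible_props_finite {B W : Type*} [Group W] [Finite W] {M : CoxeterMatrix B}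
    (cs : CoxeterSystem M W) (A : Set W) (hA : ∀ t ∈ A, cs.IsReflection t)
    (w₀ : W) (hw₀ : ∀ w : W, cs.length w ≤ cs.length w₀) :
    (∃ w : W, {t ∈ A | cs.length (w * t) < cs.length w} = A) ∧
      (∀ I : Set W, I ⊆ A →
        ((∃ w : W, {t ∈ A | cs.length (w * t) < cs.length w} = I) ↔
          (∃ w : W, {t ∈ A | cs.length (w * t) < cs.length w} = A \ I))) ∧
      ({w : W | {t ∈ A | cs.length (w * t) < cs.length w} = A} = {w₀} ↔
        Set.range cs.simple ⊆ A) :=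
  admissible_props_finite_general cs A hA w₀ hw₀
end

section
/- Let W = W₁ × W₂ be a finite Coxeter group which is a direct product of two standard parabolic subgroups, T its reflections, and A ⊆ T. Then for every A-admissible I, the set {w ∈ W : D_A(w) = I} equals the product of {w₁ ∈ W₁ : D_{A∩W₁}(w₁) = I∩W₁} and {w₂ ∈ W₂ : D_{A∩W₂}(w₂) = I∩W₂}. -/
/-!
Splitting `S = S₁ ⊔ S₂` with `m(s₁, s₂) = 2` across the split gives two retractions
`p₁, p₂ : W → W` onto `W₁` and `W₂`, sending a simple reflection to itself on one side and to `1`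
on the other. Then `w = p₁(w) p₂(w)`, and `ℓ(w) = ℓ(p₁ w) + ℓ(p₂ w)` because a reduced word for `w`
splits into words for `p₁ w` and `p₂ w`. A reflection is conjugate to a simple one, so it lies in
`W₁` or in `W₂`, and for `t ∈ W₁` we get `ℓ(wt) - ℓ(w) = ℓ(p₁(w) t) - ℓ(p₁ w)`. Hence the
`A`-descent set of `w` is the union of the descent sets of its two components.
-/

open Set

theorem Set.eq_iff_inter_eq_inter_of_subset_union {α : Type*} {s t u v : Set α}
    (hs : s ⊆ u ∪ v) (ht : t ⊆ u ∪ v) : s = t ↔ s ∩ u = t ∩ u ∧ s ∩ v = t ∩ v := by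
  refine ⟨fun h => h ▸ ⟨rfl, rfl⟩, fun ⟨hu, hv⟩ => ?_⟩
  rw [← inter_eq_left.2 hs, ← inter_eq_left.2 ht, inter_union_distrib_left,
    inter_union_distrib_left, hu, hv]

namespace CoxeterMatrix

variable {B : Type*}

def IsSplitting (M : CoxeterMatrix B) (S : Set B) : Prop :=
  ∀ i ∈ S, ∀ j ∉ S, M i j = 2

theorem IsSplitting.compl {M : CoxeterMatrix B} {S : Set B} (hS : M.IsSplitting S) :
    M.IsSplitting Sᶜ :=
  fun i hi j hj => (M.symmetric i j).trans (hS j (not_not.mp hj) i hi)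

end CoxeterMatrix

namespace CoxeterSystem

variable {B W : Type*} [Group W] {M : CoxeterMatrix B} (cs : CoxeterSystem M W)

def parabolic (S : Set B) : Subgroup W :=
  Subgroup.closure (cs.simple '' S)

theorem simple_mem_parabolic {S : Set B} {i : B} (hi : i ∈ S) : cs.simple i ∈ cs.parabolic S :=
  Subgroup.subset_closure ⟨i, hi, rfl⟩

theorem commute_simple_of_eq_two {i j : B} (h : M i j = 2) :
    Commute (cs.simple i) (cs.simple j) := by
  have := cs.simple_mul_simple_pow i j
  rwa [h, pow_two, mul_eq_one_iff_eq_inv, mul_inv_rev, inv_simple, inv_simple] at this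

variable {S : Set B} (hS : M.IsSplitting S)
include hS

theorem commute_of_mem_parabolic {x y : W} (hx : x ∈ cs.parabolic S)
    (hy : y ∈ cs.parabolic Sᶜ) : Commute x y := by
  have hle : cs.parabolic S ≤ Subgroup.centralizer (cs.parabolic Sᶜ) := by
    rw [parabolic, parabolic, Subgroup.centralizer_closure, Subgroup.closure_le]
    rintro _ ⟨i, hi, rfl⟩ _ ⟨j, hj, rfl⟩
    exact (cs.commute_simple_of_eq_two (hS i hi j hj)).symm
  exact (Subgroup.mem_centralizer_iff.mp (hle hx) y hy).symm

open Classical in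
theorem isLiftable_ite_simple : M.IsLiftable fun i => if i ∈ S then cs.simple i else 1 := by
  intro i j
  by_cases hi : i ∈ S <;> by_cases hj : j ∈ S <;>
    simp only [hi, hj, if_true, if_false, mul_one, one_mul]
  · exact cs.simple_mul_simple_pow i j
  · rw [hS i hi j hj, simple_sq]
  · rw [hS.compl i hi j (not_not.mpr hj), simple_sq]
  · exact one_pow _

open Classical in
noncomputable def parabolicProj : W →* W :=
  cs.lift ⟨fun i => if i ∈ S then cs.simple i else 1, cs.isLiftable_ite_simple hS⟩

theorem parabolicProj_simple_of_mem {i : B} (hi : i ∈ S) :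
    cs.parabolicProj hS (cs.simple i) = cs.simple i := by
  classical
  simp [parabolicProj, hi]

theorem parabolicProj_simple_of_notMem {i : B} (hi : i ∉ S) :
    cs.parabolicProj hS (cs.simple i) = 1 := by
  classical
  simp [parabolicProj, hi]

theorem parabolicProj_eq_self {T : Set B} (hT : T ⊆ S) {w : W} (hw : w ∈ cs.parabolic T) :
    cs.parabolicProj hS w = w := by
  have hle : cs.parabolic T ≤ (cs.parabolicProj hS).eqLocus (MonoidHom.id W) := by
    rw [parabolic, Subgroup.closure_le]
    rintro _ ⟨i, hi, rfl⟩
    exact cs.parabolicProj_simple_of_mem hS (hT hi)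
  exact hle hw

theorem parabolicProj_eq_one {T : Set B} (hT : Disjoint S T) {w : W}
    (hw : w ∈ cs.parabolic T) : cs.parabolicProj hS w = 1 := by
  have hle : cs.parabolic T ≤ (cs.parabolicProj hS).ker := by
    rw [parabolic, Subgroup.closure_le]
    rintro _ ⟨i, hi, rfl⟩
    exact cs.parabolicProj_simple_of_notMem hS (hT.notMem_of_mem_right hi)
  exact hle hw

theorem parabolicProj_mem (w : W) : cs.parabolicProj hS w ∈ cs.parabolic S := by
  induction w using cs.simple_induction_left with
  | one => simp [one_mem]
  | mul_simple_left w i ih =>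
    by_cases hi : i ∈ S
    · rw [map_mul, cs.parabolicProj_simple_of_mem hS hi]
      exact mul_mem (cs.simple_mem_parabolic hi) ih
    · rwa [map_mul, cs.parabolicProj_simple_of_notMem hS hi, one_mul]

theorem parabolicProj_mul_compl (w : W) :
    cs.parabolicProj hS w * cs.parabolicProj hS.compl w = w := by
  induction w using cs.simple_induction_left with
  | one => simp
  | mul_simple_left w i ih =>
    by_cases hi : i ∈ S
    · rw [map_mul, map_mul, cs.parabolicProj_simple_of_mem hS hi,
        cs.parabolicProj_simple_of_notMem hS.compl (not_not.mpr hi), one_mul, mul_assoc, ih]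
    · have hcomm := cs.commute_of_mem_parabolic hS (cs.parabolicProj_mem hS w)
        (cs.simple_mem_parabolic (S := Sᶜ) hi)
      rw [map_mul, map_mul, cs.parabolicProj_simple_of_notMem hS hi,
        cs.parabolicProj_simple_of_mem hS.compl hi, one_mul, ← mul_assoc, hcomm.eq, mul_assoc, ih]

theorem parabolicProj_mul_of_mem {x y : W} (hx : x ∈ cs.parabolic S)
    (hy : y ∈ cs.parabolic Sᶜ) : cs.parabolicProj hS (x * y) = x := by
  rw [map_mul, cs.parabolicProj_eq_self hS subset_rfl hx,
    cs.parabolicProj_eq_one hS disjoint_compl_right hy, mul_one]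

theorem parabolicProj_compl_mul_of_mem {x y : W} (hx : x ∈ cs.parabolic S)
    (hy : y ∈ cs.parabolic Sᶜ) : cs.parabolicProj hS.compl (x * y) = y := by
  rw [map_mul, cs.parabolicProj_eq_one hS.compl disjoint_compl_left hx,
    cs.parabolicProj_eq_self hS.compl subset_rfl hy, one_mul]

theorem length_parabolicProj_add_le_length_wordProd (ω : List B) :
    cs.length (cs.parabolicProj hS (cs.wordProd ω)) +
      cs.length (cs.parabolicProj hS.compl (cs.wordProd ω)) ≤ ω.length := by
  induction ω with
  | nil => simp
  | cons i ω ih =>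
    rw [cs.wordProd_cons, map_mul, map_mul, List.length_cons]
    by_cases hi : i ∈ S
    · have := cs.length_mul_le (cs.simple i) (cs.parabolicProj hS (cs.wordProd ω))
      rw [cs.parabolicProj_simple_of_mem hS hi,
        cs.parabolicProj_simple_of_notMem hS.compl (not_not.mpr hi), one_mul]
      rw [length_simple] at this
      omega
    · have := cs.length_mul_le (cs.simple i) (cs.parabolicProj hS.compl (cs.wordProd ω))
      rw [cs.parabolicProj_simple_of_notMem hS hi, cs.parabolicProj_simple_of_mem hS.compl hi,
        one_mul]
      rw [length_simple] at this
      omega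

theorem length_eq_length_parabolicProj_add (w : W) :
    cs.length w =
      cs.length (cs.parabolicProj hS w) + cs.length (cs.parabolicProj hS.compl w) := by
  refine le_antisymm ?_ ?_
  · conv_lhs => rw [← cs.parabolicProj_mul_compl hS w]
    exact cs.length_mul_le _ _
  · obtain ⟨ω, hω, rfl⟩ := cs.exists_isReduced w
    exact hω.eq ▸ cs.length_parabolicProj_add_le_length_wordProd hS ω

theorem length_mul_lt_iff_of_mem_parabolic {w t : W} (ht : t ∈ cs.parabolic S) :
    cs.length (w * t) < cs.length w ↔
      cs.length (cs.parabolicProj hS w * t) < cs.length (cs.parabolicProj hS w) := by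
  rw [cs.length_eq_length_parabolicProj_add hS (w * t), cs.length_eq_length_parabolicProj_add hS w,
    map_mul, map_mul, cs.parabolicProj_eq_self hS subset_rfl ht,
    cs.parabolicProj_eq_one hS.compl disjoint_compl_left ht, mul_one]
  exact Nat.add_lt_add_iff_right

theorem sep_length_mul_lt_inter_parabolic (A : Set W) (w : W) :
    {t ∈ A | cs.length (w * t) < cs.length w} ∩ cs.parabolic S =
      {t ∈ A ∩ cs.parabolic S |
        cs.length (cs.parabolicProj hS w * t) < cs.length (cs.parabolicProj hS w)} :=
  Set.ext fun _ =>
    ⟨fun ⟨⟨hA, hlt⟩, ht⟩ => ⟨⟨hA, ht⟩, (cs.length_mul_lt_iff_of_mem_parabolic hS ht).1 hlt⟩,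
      fun ⟨⟨hA, ht⟩, hlt⟩ => ⟨⟨hA, (cs.length_mul_lt_iff_of_mem_parabolic hS ht).2 hlt⟩, ht⟩⟩

theorem IsReflection.mem_parabolic_or_mem_parabolic_compl {t : W} (ht : cs.IsReflection t) :
    t ∈ cs.parabolic S ∨ t ∈ cs.parabolic Sᶜ := by
  obtain ⟨w, i, rfl⟩ := ht
  have hsplit := cs.parabolicProj_mul_compl hS (w * cs.simple i * w⁻¹)
  by_cases hi : i ∈ S
  · have hq : cs.parabolicProj hS.compl (w * cs.simple i * w⁻¹) = 1 := by
      rw [map_mul, map_mul, cs.parabolicProj_simple_of_notMem hS.compl (not_not.mpr hi), mul_one,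
        map_inv, mul_inv_cancel]
    rw [hq, mul_one] at hsplit
    exact .inl (hsplit ▸ cs.parabolicProj_mem hS _)
  · have hp : cs.parabolicProj hS (w * cs.simple i * w⁻¹) = 1 := by
      rw [map_mul, map_mul, cs.parabolicProj_simple_of_notMem hS hi, mul_one, map_inv,
        mul_inv_cancel]
    rw [hp, one_mul] at hsplit
    exact .inr (hsplit ▸ cs.parabolicProj_mem hS.compl _)

end CoxeterSystem

theorem descent_class_product_general {B W : Type*} [Group W] {M : CoxeterMatrix B}
    (cs : CoxeterSystem M W) (S₁ S₂ : Set B)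
    (hunion : S₁ ∪ S₂ = Set.univ) (hdisj : Disjoint S₁ S₂)
    (hcomm : ∀ i ∈ S₁, ∀ j ∈ S₂, M i j = 2)
    (W₁ W₂ : Subgroup W)
    (hW₁ : W₁ = Subgroup.closure (cs.simple '' S₁))
    (hW₂ : W₂ = Subgroup.closure (cs.simple '' S₂))
    (A : Set W) (hA : ∀ t ∈ A, cs.IsReflection t)
    (I : Set W) (hI : ∃ w : W, {t ∈ A | cs.length (w * t) < cs.length w} = I) :
    {w : W | {t ∈ A | cs.length (w * t) < cs.length w} = I} =
      {w : W | ∃ w₁ ∈ W₁, ∃ w₂ ∈ W₂, w = w₁ * w₂ ∧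
        {t ∈ A ∩ W₁ | cs.length (w₁ * t) < cs.length w₁} = I ∩ W₁ ∧
        {t ∈ A ∩ W₂ | cs.length (w₂ * t) < cs.length w₂} = I ∩ W₂} := by
  obtain rfl : S₂ = S₁ᶜ := (IsCompl.of_eq hdisj.eq_bot hunion).compl_eq.symm
  have hS : M.IsSplitting S₁ := hcomm
  obtain rfl : W₁ = cs.parabolic S₁ := hW₁
  obtain rfl : W₂ = cs.parabolic S₁ᶜ := hW₂
  have hcover : A ⊆ cs.parabolic S₁ ∪ cs.parabolic S₁ᶜ := fun t ht =>
    (hA t ht).mem_parabolic_or_mem_parabolic_compl cs hS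
  have hIA : I ⊆ A := by
    obtain ⟨v, rfl⟩ := hI
    exact sep_subset _ _
  ext w
  rw [mem_ofPred_eq, eq_iff_inter_eq_inter_of_subset_union ((sep_subset _ _).trans hcover)
      (hIA.trans hcover), cs.sep_length_mul_lt_inter_parabolic hS,
    cs.sep_length_mul_lt_inter_parabolic hS.compl]
  constructor
  · rintro ⟨h₁, h₂⟩
    exact ⟨_, cs.parabolicProj_mem hS w, _, cs.parabolicProj_mem hS.compl w,
      (cs.parabolicProj_mul_compl hS w).symm, h₁, h₂⟩
  · rintro ⟨x, hx, y, hy, rfl, h₁, h₂⟩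
    rw [cs.parabolicProj_mul_of_mem hS hx hy, cs.parabolicProj_compl_mul_of_mem hS hx hy]
    exact ⟨h₁, h₂⟩

/-- If `W = W₁ × W₂` is a finite Coxeter group which is a direct product
of two standard parabolic subgroups (corresponding to a partition `S = S₁ ⊔ S₂` with all
entries `M i j = 2` across the partition), then for every `A`-admissible `I`,
`D_I^A = D_{I ∩ W₁}^{A ∩ W₁} × D_{I ∩ W₂}^{A ∩ W₂}`. -/
theorem descent_class_product {B W : Type*} [Group W] [Finite W] {M : CoxeterMatrix B}
    (cs : CoxeterSystem M W) (S₁ S₂ : Set B)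
    (hunion : S₁ ∪ S₂ = Set.univ) (hdisj : Disjoint S₁ S₂)
    (hcomm : ∀ i ∈ S₁, ∀ j ∈ S₂, M i j = 2)
    (W₁ W₂ : Subgroup W)
    (hW₁ : W₁ = Subgroup.closure (cs.simple '' S₁))
    (hW₂ : W₂ = Subgroup.closure (cs.simple '' S₂))
    (A : Set W) (hA : ∀ t ∈ A, cs.IsReflection t)
    (I : Set W) (hI : ∃ w : W, {t ∈ A | cs.length (w * t) < cs.length w} = I) :
    {w : W | {t ∈ A | cs.length (w * t) < cs.length w} = I} =
      {w : W | ∃ w₁ ∈ W₁, ∃ w₂ ∈ W₂, w = w₁ * w₂ ∧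
        {t ∈ A ∩ W₁ | cs.length (w₁ * t) < cs.length w₁} = I ∩ W₁ ∧
        {t ∈ A ∩ W₂ | cs.length (w₂ * t) < cs.length w₂} = I ∩ W₂} :=
  descent_class_product_general cs S₁ S₂ hunion hdisj hcomm W₁ W₂ hW₁ hW₂ A hA I hI
end

section
/- Let (W,S) be a Coxeter system with reflections T and A ⊆ T. Define w ∼_A w' as the reflexive-transitive closure of the relation w ⌣_A w' given by (w'w⁻¹ ∈ S and w⁻¹w' ∉ A). Then for all w, w' ∈ W: w ∼_A w' if and only if D_A(w) = D_A(w'), which holds if and only if N_A(w) = N_A(w'). -/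
/-!
The engine is the classical positivity theorem for the geometric representation: if
`ℓ(w sᵢ) > ℓ(w)` then `w(αᵢ)` is a non-negative combination of simple roots. One writes
`w = u x` with `x` in the dihedral subgroup generated by `sᵢ` and a right descent `sⱼ` of `w`
and `u` without right descents in `{sᵢ, sⱼ}`; then `x(αᵢ) = p αᵢ + q αⱼ` where `p, q` are
values of Chebyshev polynomials at `cos (π / mᵢⱼ)`, non-negative because `x` is a short alternating
word, and induction on the length applies to `u(αᵢ)` and `u(αⱼ)`.

From positivity, `ℓ(w t) < ℓ(w)` iff `w` sends the positive root of the reflection `t` to a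
negative root. Hence `N_A(w)` consists of the positive roots whose reflection lies in `D_A(w)`,
and the two sets determine each other. A simple reflection `sᵢ` permutes the positive roots other
than `αᵢ`, so `D_A(sᵢ w) = D_A(w)` as long as `w⁻¹ sᵢ w ∉ A`. Conversely, if
`D_A(w) = D_A(w')` and `sᵢ` is a right descent of `w' w⁻¹`, then `w` and `w'` send the root
`w⁻¹(αᵢ)` to roots of opposite signs, so its reflection `w⁻¹ sᵢ w` is not in `A`; stepping
from `w` to `sᵢ w` shortens `w' w⁻¹`.
-/

namespace Polynomial.Chebyshev

open Real

theorem U_real_cos_pi_div_nonneg {m : ℕ} (hm : m ≠ 1) {n : ℤ} (hn : -1 ≤ n)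
    (hnm : m = 0 ∨ n < m) : 0 ≤ (U ℝ n).eval (cos (π / m)) := by
  obtain rfl | hm2 : m = 0 ∨ 2 ≤ m := by omega
  · simp only [CharP.cast_eq_zero, div_zero, cos_zero, U_eval_one]
    exact_mod_cast (show (0 : ℤ) ≤ n + 1 by omega)
  replace hnm : n < m := hnm.resolve_left (by omega)
  replace hm2 : (2 : ℝ) ≤ m := by exact_mod_cast hm2
  have hθ : 0 < π / m := by positivity
  have hsin : 0 < sin (π / m) := sin_pos_of_pos_of_lt_pi hθ (div_lt_self pi_pos (by linarith))
  refine nonneg_of_mul_nonneg_left ?_ hsin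
  rw [U_real_cos]
  apply sin_nonneg_of_nonneg_of_le_pi
  · have : (0 : ℝ) ≤ n + 1 := by exact_mod_cast (show (0 : ℤ) ≤ n + 1 by omega)
    positivity
  · calc ((n : ℝ) + 1) * (π / m) ≤ m * (π / m) := by
          gcongr; exact_mod_cast (show n + 1 ≤ (m : ℤ) by omega)
      _ = π := by field_simp

end Polynomial.Chebyshev

namespace CoxeterSystem

open Polynomial Polynomial.Chebyshev Real

variable {B W : Type*} [Group W] {M : CoxeterMatrix B} (cs : CoxeterSystem M W)

theorem wordProd_alternatingWord_succ (a b : B) (k : ℕ) :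
    cs.wordProd (alternatingWord a b (k + 1)) =
      cs.wordProd (alternatingWord b a k) * cs.simple b := by
  rw [alternatingWord_succ, wordProd_concat]

theorem exists_alternatingWord_eq_mul_simple {a b l : B} (hl : l = a ∨ l = b) (k : ℕ) :
    ∃ k' ≤ k + 1,
      cs.wordProd (alternatingWord a b k) * cs.simple l = cs.wordProd (alternatingWord a b k') ∨
      cs.wordProd (alternatingWord a b k) * cs.simple l = cs.wordProd (alternatingWord b a k') := by
  rcases hl with rfl | rfl
  · exact ⟨k + 1, le_rfl, Or.inr (cs.wordProd_alternatingWord_succ b l k).symm⟩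
  · cases k with
    | zero => exact ⟨1, by omega, Or.inl (by simp [alternatingWord])⟩
    | succ k =>
      refine ⟨k, by omega, Or.inr ?_⟩
      rw [wordProd_alternatingWord_succ, simple_mul_simple_cancel_right]

theorem exists_alternatingWord_eq_wordProd {i j : B} (τ : List B)
    (hτ : ∀ l ∈ τ, l = i ∨ l = j) :
    ∃ k ≤ τ.length, cs.wordProd τ = cs.wordProd (alternatingWord i j k) ∨
      cs.wordProd τ = cs.wordProd (alternatingWord j i k) := by
  induction τ using List.reverseRecOn with
  | nil => exact ⟨0, le_rfl, Or.inl rfl⟩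
  | append_singleton τ l ih =>
    have hl : l = i ∨ l = j := hτ l (by simp)
    obtain ⟨k, hk, h | h⟩ := ih fun l' hl' => hτ l' (by simp [hl'])
    · obtain ⟨k', hk', h'⟩ := cs.exists_alternatingWord_eq_mul_simple hl k
      exact ⟨k', by simp; omega, by rwa [wordProd_append, wordProd_singleton, h]⟩
    · obtain ⟨k', hk', h'⟩ := cs.exists_alternatingWord_eq_mul_simple hl.symm k
      exact ⟨k', by simp; omega, by rw [wordProd_append, wordProd_singleton, h]; exact h'.symm⟩

theorem exists_alternatingWord_eq_wordProd_of_length_lt {i j : B} (τ : List B)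
    (hτ : ∀ l ∈ τ, l = i ∨ l = j)
    (hlen : τ.length < cs.length (cs.wordProd τ * cs.simple i)) :
    ∃ k, (M i j = 0 ∨ k < M i j) ∧ cs.wordProd τ = cs.wordProd (alternatingWord i j k) := by
  have not_ji : ∀ k, 0 < k → k ≤ τ.length →
      cs.wordProd τ ≠ cs.wordProd (alternatingWord j i k) := by
    rintro (_ | k) hk0 hk h
    · omega
    rw [h, wordProd_alternatingWord_succ, simple_mul_simple_cancel_right] at hlen
    have := cs.length_wordProd_le (alternatingWord i j k)
    rw [length_alternatingWord] at this
    omega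
  obtain ⟨k, hk, h | h⟩ := cs.exists_alternatingWord_eq_wordProd τ hτ
  · by_cases hm : M i j = 0 ∨ k < M i j
    · exact ⟨k, hm, h⟩
    push Not at hm
    rcases hm.2.lt_or_eq with hlt | heq
    · have hred := cs.not_isReduced_alternatingWord i j hm.1 hlt
      have hle := cs.length_wordProd_le (alternatingWord i j k)
      have hmul := cs.length_mul_le (cs.wordProd τ) (cs.simple i)
      rw [IsReduced, length_alternatingWord] at hred
      rw [length_alternatingWord] at hle
      rw [length_simple, h] at hmul
      rw [h] at hlen
      omega
    · have hbraid := cs.wordProd_braidWord_eq i j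
      rw [braidWord, braidWord, M.symmetric j i, heq] at hbraid
      exact absurd (h.trans hbraid) (not_ji k (by omega) hk)
  · rcases k.eq_zero_or_pos with rfl | hk0
    · exact ⟨0, by omega, h⟩
    · exact absurd h (not_ji k hk0 hk)

theorem exists_eq_mul_wordProd_forall_not_isRightDescent (I : Set B) (w : W) :
    ∃ u τ, (∀ l ∈ τ, l ∈ I) ∧ w = u * cs.wordProd τ ∧
      cs.length w = cs.length u + τ.length ∧ ∀ l ∈ I, ¬ cs.IsRightDescent u l := by
  induction hn : cs.length w using Nat.strong_induction_on generalizing w with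
  | _ n ih =>
  by_cases h : ∃ l ∈ I, cs.IsRightDescent w l
  · obtain ⟨l, hlI, hl⟩ := h
    obtain ⟨u, τ, hτ, hw, hlen, hu⟩ := ih _ (hn ▸ hl) (w * cs.simple l) rfl
    refine ⟨u, τ ++ [l], ?_, ?_, ?_, hu⟩
    · simpa [or_imp, forall_and] using ⟨hτ, hlI⟩
    · rw [wordProd_append, wordProd_singleton, ← mul_assoc, ← hw,
        simple_mul_simple_cancel_right]
    · have := cs.isRightDescent_iff.mp hl
      simp only [List.length_append, List.length_singleton]
      omega
  · push Not at h
    exact ⟨w, [], by simp, by simp, by simp [hn], h⟩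

def descentSet (A : Set W) (w : W) : Set W := {t ∈ A | cs.length (w * t) < cs.length w}

def Adj (A : Set W) (u v : W) : Prop := v * u⁻¹ ∈ Set.range cs.simple ∧ u⁻¹ * v ∉ A

/-- `M i i' = 0` stands for `mᵢᵢ' = ∞`; as `π / 0 = 0` in Lean, `bil_b_b` then gives the correct
value `-1`. -/
structure GeometricRepresentation (V : Type*) [AddCommGroup V] [Module ℝ V] where
  b : Module.Basis B ℝ V
  bil : LinearMap.BilinForm ℝ V
  bil_b_b : ∀ i i' : B, bil (b i) (b i') = -cos (π / (M i i' : ℝ))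
  ρ : W →* V ≃ₗ[ℝ] V
  ρ_simple : ∀ (i : B) (v : V), ρ (cs.simple i) v = v - (2 * bil (b i) v) • b i

namespace GeometricRepresentation

variable {cs} {V : Type*} [AddCommGroup V] [Module ℝ V] (G : cs.GeometricRepresentation V)

theorem ρ_mul_apply (u v : W) (x : V) : G.ρ (u * v) x = G.ρ u (G.ρ v x) := by
  rw [map_mul]; rfl

@[simp]
theorem ρ_one_apply (x : V) : G.ρ 1 x = x := by
  rw [map_one]; rfl

@[simp]
theorem bil_b_self (i : B) : G.bil (G.b i) (G.b i) = 1 := by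
  simp [G.bil_b_b]

theorem bil_comm (x y : V) : G.bil x y = G.bil y x := by
  suffices G.bil = G.bil.flip from LinearMap.congr_fun₂ this x y
  refine G.b.ext fun i => G.b.ext fun j => ?_
  change _ = G.bil (G.b j) (G.b i)
  rw [G.bil_b_b, G.bil_b_b, M.symmetric]

theorem ρ_simple_b (i : B) : G.ρ (cs.simple i) (G.b i) = -G.b i := by
  rw [G.ρ_simple, bil_b_self]
  module

theorem bil_ρ_simple_ρ_simple (i : B) (x y : V) :
    G.bil (G.ρ (cs.simple i) x) (G.ρ (cs.simple i) y) = G.bil x y := by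
  rw [G.ρ_simple, G.ρ_simple]
  simp only [map_sub, map_smul, LinearMap.sub_apply, LinearMap.smul_apply, smul_eq_mul,
    bil_b_self, G.bil_comm x (G.b i)]
  ring

theorem bil_ρ_ρ (w : W) (x y : V) : G.bil (G.ρ w x) (G.ρ w y) = G.bil x y := by
  induction w using cs.simple_induction_left generalizing x y with
  | one => simp
  | mul_simple_left w i ih => rw [G.ρ_mul_apply, G.ρ_mul_apply, bil_ρ_simple_ρ_simple, ih]

theorem ρ_simple_smul_add_smul (i j : B) (p q : ℝ) :
    G.ρ (cs.simple i) (p • G.b i + q • G.b j) =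
      (2 * q * -G.bil (G.b i) (G.b j) - p) • G.b i + q • G.b j := by
  rw [G.ρ_simple]
  simp only [map_add, map_smul, smul_eq_mul, bil_b_self]
  module

theorem ρ_alternatingWord_b (i j : B) (k : ℕ) :
    let a : ℤ → ℝ := fun n => (U ℝ n).eval (-G.bil (G.b i) (G.b j))
    G.ρ (cs.wordProd (alternatingWord i j k)) (G.b i) =
      (if Even k then a k else a (k - 1)) • G.b i +
        (if Even k then a (k - 1) else a k) • G.b j := by
  intro a
  have ha : ∀ n : ℤ, a (n + 1) = 2 * -G.bil (G.b i) (G.b j) * a n - a (n - 1) := by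
    intro n; simp [a, U_add_one]
  induction k with
  | zero => simp [a, alternatingWord]
  | succ k ih =>
    rw [alternatingWord_succ', wordProd_cons, G.ρ_mul_apply, ih]
    rcases Nat.even_or_odd k with hk | hk
    · have hk' : ¬ Even (k + 1) := by simpa [Nat.even_add_one] using hk
      simp only [hk, hk', if_true, if_false]
      rw [add_comm, G.ρ_simple_smul_add_smul j i, G.bil_comm, add_comm]
      push_cast
      rw [ha, add_sub_cancel_right]
      congr 2; ring
    · have hk' : Even (k + 1) := by simpa [Nat.even_add_one] using hk
      simp only [Nat.not_even_iff_odd.mpr hk, hk', if_true, if_false]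
      rw [G.ρ_simple_smul_add_smul]
      push_cast
      rw [ha, add_sub_cancel_right]
      congr 2; ring

theorem exists_nonneg_ρ_alternatingWord_b {i j : B} (hij : i ≠ j) (k : ℕ)
    (hk : M i j = 0 ∨ k < M i j) :
    ∃ p q : ℝ, 0 ≤ p ∧ 0 ≤ q ∧
      G.ρ (cs.wordProd (alternatingWord i j k)) (G.b i) = p • G.b i + q • G.b j := by
  have hnonneg : ∀ n : ℤ, -1 ≤ n → n < k + 1 →
      0 ≤ (U ℝ n).eval (-G.bil (G.b i) (G.b j)) := by
    intro n hn hnk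
    rw [G.bil_b_b, neg_neg]
    refine U_real_cos_pi_div_nonneg (M.off_diagonal i j hij) hn ?_
    omega
  refine ⟨_, _, ?_, ?_, G.ρ_alternatingWord_b i j k⟩ <;> split <;>
    exact hnonneg _ (by omega) (by omega)

def IsRoot (v : V) : Prop := ∃ (u : W) (k : B), G.ρ u (G.b k) = v

def posRoots : Set V := {v | G.IsRoot v ∧ ∀ k : B, 0 ≤ G.b.repr v k}

variable {G}

theorem IsRoot.ρ {v : V} (hv : G.IsRoot v) (w : W) : G.IsRoot (G.ρ w v) := by
  obtain ⟨u, k, rfl⟩ := hv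
  exact ⟨w * u, k, G.ρ_mul_apply w u _⟩

theorem IsRoot.ne_zero {v : V} (hv : G.IsRoot v) : v ≠ 0 := by
  obtain ⟨u, k, rfl⟩ := hv
  exact (map_ne_zero_iff _ (G.ρ u).injective).mpr (G.b.ne_zero k)

theorem IsRoot.bil_self {v : V} (hv : G.IsRoot v) : G.bil v v = 1 := by
  obtain ⟨u, k, rfl⟩ := hv
  rw [bil_ρ_ρ, bil_b_self]

variable (G)

theorem b_mem_posRoots (i : B) : G.b i ∈ G.posRoots := by
  refine ⟨⟨1, i, G.ρ_one_apply _⟩, fun k => ?_⟩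
  classical
  rw [G.b.repr_self, Finsupp.single_apply]
  split <;> norm_num

theorem neg_notMem_posRoots {v : V} (hv : v ∈ G.posRoots) : -v ∉ G.posRoots := by
  rintro ⟨-, hneg⟩
  apply hv.1.ne_zero
  refine G.b.repr.injective (Finsupp.ext fun k => ?_)
  have := hneg k
  simp only [map_neg, Finsupp.coe_neg, Pi.neg_apply] at this
  simp only [map_zero, Finsupp.coe_zero, Pi.zero_apply]
  linarith [hv.2 k]

theorem repr_ρ_b_nonneg {w : W} {i : B} (hi : ¬ cs.IsRightDescent w i) (k : B) :
    0 ≤ G.b.repr (G.ρ w (G.b i)) k := by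
  induction hn : cs.length w using Nat.strong_induction_on generalizing w i with
  | _ n ih =>
  rcases eq_or_ne w 1 with rfl | hw
  · simpa using (G.b_mem_posRoots i).2 k
  obtain ⟨j, hj⟩ := cs.exists_rightDescent_of_ne_one hw
  have hij : i ≠ j := by rintro rfl; exact hi hj
  obtain ⟨u, τ, hτ, rfl, hlen, hu⟩ :=
    cs.exists_eq_mul_wordProd_forall_not_isRightDescent {i, j} w
  have hτ_ne : τ ≠ [] := by
    rintro rfl
    simp only [wordProd_nil, mul_one] at hj
    exact hu j (by simp) hj
  have hu_lt : cs.length u < n := by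
    have := List.length_pos_iff.mpr hτ_ne
    omega
  have hτ_short : τ.length < cs.length (cs.wordProd τ * cs.simple i) := by
    have h₁ := cs.not_isRightDescent_iff.mp hi
    have h₂ := cs.length_mul_le u (cs.wordProd τ * cs.simple i)
    rw [← mul_assoc] at h₂
    omega
  obtain ⟨κ, hκ, hτκ⟩ := cs.exists_alternatingWord_eq_wordProd_of_length_lt τ
    (fun l hl => by simpa using hτ l hl) hτ_short
  obtain ⟨p, q, hp, hq, hpq⟩ := G.exists_nonneg_ρ_alternatingWord_b hij κ hκ
  rw [G.ρ_mul_apply, hτκ, hpq]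
  simp only [map_add, map_smul, Finsupp.coe_add, Finsupp.coe_smul, Pi.add_apply, Pi.smul_apply,
    smul_eq_mul]
  exact add_nonneg (mul_nonneg hp (ih _ hu_lt (hu i (by simp)) rfl))
    (mul_nonneg hq (ih _ hu_lt (hu j (by simp)) rfl))

theorem ρ_b_mem_posRoots {w : W} {i : B} (hi : ¬ cs.IsRightDescent w i) :
    G.ρ w (G.b i) ∈ G.posRoots :=
  ⟨⟨w, i, rfl⟩, G.repr_ρ_b_nonneg hi⟩

theorem neg_ρ_b_mem_posRoots {w : W} {i : B} (hi : cs.IsRightDescent w i) :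
    -G.ρ w (G.b i) ∈ G.posRoots := by
  have := G.ρ_b_mem_posRoots (cs.isRightDescent_iff_not_isRightDescent_mul.mp hi)
  rwa [G.ρ_mul_apply, ρ_simple_b, map_neg] at this

variable {G}

theorem IsRoot.mem_posRoots_or_neg {v : V} (hv : G.IsRoot v) :
    v ∈ G.posRoots ∨ -v ∈ G.posRoots := by
  obtain ⟨w, i, rfl⟩ := hv
  by_cases hi : cs.IsRightDescent w i
  · exact Or.inr (G.neg_ρ_b_mem_posRoots hi)
  · exact Or.inl (G.ρ_b_mem_posRoots hi)

variable (G)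

theorem eq_b_of_mem_posRoots {v : V} {j : B} (hv : v ∈ G.posRoots)
    (hsupp : ∀ k, k ≠ j → G.b.repr v k = 0) : v = G.b j := by
  have hvj : v = G.b.repr v j • G.b j := by
    conv_lhs => rw [← G.b.linearCombination_repr v]
    rw [Finsupp.linearCombination_apply, Finsupp.sum_eq_single j (fun k _ hk => by
      simp [hsupp k hk]) (by simp)]
  have hsq : G.b.repr v j * G.b.repr v j = 1 := by
    have := hv.1.bil_self
    rw [hvj] at this
    simpa only [map_smul, LinearMap.smul_apply, smul_eq_mul, bil_b_self, mul_one] using this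
  have hone : G.b.repr v j = 1 := by nlinarith [hv.2 j]
  rw [hvj, hone, one_smul]

theorem repr_ρ_simple_of_ne (v : V) {j k : B} (hk : k ≠ j) :
    G.b.repr (G.ρ (cs.simple j) v) k = G.b.repr v k := by
  classical
  simp [G.ρ_simple, hk.symm]

theorem ρ_simple_mem_posRoots {v : V} {j : B} (hv : v ∈ G.posRoots) (hne : v ≠ G.b j) :
    G.ρ (cs.simple j) v ∈ G.posRoots := by
  obtain ⟨k, hkj, hk⟩ : ∃ k, k ≠ j ∧ G.b.repr v k ≠ 0 := by
    by_contra! h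
    exact hne (G.eq_b_of_mem_posRoots hv h)
  refine ((hv.1.ρ _).mem_posRoots_or_neg).resolve_right fun hneg => hk ?_
  have := hneg.2 k
  rw [map_neg, Finsupp.neg_apply, G.repr_ρ_simple_of_ne v hkj] at this
  exact le_antisymm (by linarith) (hv.2 k)

theorem neg_ρ_simple_mem_posRoots_iff {v : V} {i : B} (hv : G.IsRoot v) (h₁ : v ≠ G.b i)
    (h₂ : -v ≠ G.b i) : -G.ρ (cs.simple i) v ∈ G.posRoots ↔ -v ∈ G.posRoots := by
  rcases hv.mem_posRoots_or_neg with hpos | hneg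
  · exact iff_of_false (G.neg_notMem_posRoots (G.ρ_simple_mem_posRoots hpos h₁))
      (G.neg_notMem_posRoots hpos)
  · exact iff_of_true (by simpa using G.ρ_simple_mem_posRoots hneg h₂) hneg

def IsReflectionMap (sα : V → W) : Prop :=
  ∀ (u : W) (k : B), sα (G.ρ u (G.b k)) = u * cs.simple k * u⁻¹

def inversionSet (sα : V → W) (A : Set W) (w : W) : Set V :=
  {α ∈ G.posRoots | sα α ∈ A ∧ -G.ρ w α ∈ G.posRoots}

variable {G} {sα : V → W}

namespace IsReflectionMap

variable (hsα : G.IsReflectionMap sα)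
include hsα

theorem apply_b (i : B) : sα (G.b i) = cs.simple i := by
  simpa using hsα 1 i

theorem apply_ρ {v : V} (hv : G.IsRoot v) (w : W) : sα (G.ρ w v) = w * sα v * w⁻¹ := by
  obtain ⟨u, k, rfl⟩ := hv
  rw [← G.ρ_mul_apply, hsα, hsα]
  group

theorem apply_neg {v : V} (hv : G.IsRoot v) : sα (-v) = sα v := by
  obtain ⟨u, k, rfl⟩ := hv
  rw [← map_neg, ← ρ_simple_b, ← G.ρ_mul_apply, hsα, hsα, mul_inv_rev, inv_simple]
  group
  simp

theorem isReflection {v : V} (hv : G.IsRoot v) : cs.IsReflection (sα v) := by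
  obtain ⟨u, k, rfl⟩ := hv
  exact ⟨u, k, hsα u k⟩

theorem exists_mem_posRoots {t : W} (ht : cs.IsReflection t) :
    ∃ v ∈ G.posRoots, sα v = t := by
  obtain ⟨u, k, rfl⟩ := ht
  have hroot : G.IsRoot (G.ρ u (G.b k)) := ⟨u, k, rfl⟩
  rcases hroot.mem_posRoots_or_neg with hpos | hneg
  · exact ⟨_, hpos, hsα u k⟩
  · exact ⟨_, hneg, by rw [hsα.apply_neg hroot, hsα u k]⟩

theorem ρ_apply_self {v : V} (hv : G.IsRoot v) : G.ρ (sα v) v = -v := by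
  obtain ⟨u, k, rfl⟩ := hv
  rw [hsα, ← G.ρ_mul_apply, inv_mul_cancel_right, G.ρ_mul_apply, ρ_simple_b, map_neg]

theorem ρ_mem_posRoots_of_length_lt {v : V} (hv : v ∈ G.posRoots) {w : W}
    (hlen : cs.length w < cs.length (w * sα v)) : G.ρ w v ∈ G.posRoots := by
  have ht := hsα.isReflection hv.1
  induction hn : cs.length w using Nat.strong_induction_on generalizing w with
  | _ n ih =>
  rcases eq_or_ne w 1 with rfl | hw1
  · simpa using hv
  obtain ⟨j, hj⟩ := cs.exists_leftDescent_of_ne_one hw1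
  set w₁ := cs.simple j * w
  have hw : w = cs.simple j * w₁ := by simp [w₁]
  have hlen₁ : cs.length w₁ + 1 = cs.length w := cs.isLeftDescent_iff.mp hj
  have hw₁ : cs.length w₁ < cs.length (w₁ * sα v) := by
    have hne := ht.length_mul_left_ne w₁
    have := cs.length_simple_mul (w₁ * sα v) j
    rw [← mul_assoc, ← hw] at this
    omega
  have hpos := ih _ (by omega) hw₁ rfl
  rw [hw, G.ρ_mul_apply]
  refine G.ρ_simple_mem_posRoots hpos fun heq => ?_
  -- Otherwise `w * sα v = w₁`, which is shorter than `w`.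
  have hconj : w₁ * sα v * w₁⁻¹ = cs.simple j := by
    rw [← hsα.apply_ρ hv.1, heq, hsα.apply_b]
  have hw_t : w * sα v = w₁ := by
    calc w * sα v = w₁ * (sα v * sα v) := by rw [hw, ← hconj]; group
      _ = w₁ := by rw [ht.mul_self, mul_one]
  rw [hw_t] at hlen
  omega

theorem length_mul_lt_iff {v : V} (hv : v ∈ G.posRoots) (w : W) :
    cs.length (w * sα v) < cs.length w ↔ -G.ρ w v ∈ G.posRoots := by
  have ht := hsα.isReflection hv.1
  constructor
  · intro hlt
    have := hsα.ρ_mem_posRoots_of_length_lt hv (w := w * sα v)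
      (by rwa [mul_assoc, ht.mul_self, mul_one])
    rwa [G.ρ_mul_apply, hsα.ρ_apply_self hv.1, map_neg] at this
  · intro hneg
    by_contra hge
    have hlt := lt_of_le_of_ne (not_lt.mp hge) (ht.length_mul_left_ne w).symm
    exact G.neg_notMem_posRoots (hsα.ρ_mem_posRoots_of_length_lt hv hlt) hneg

theorem not_length_mul_lt_iff {v : V} (hv : G.IsRoot v) {w w' : W}
    (hw : G.ρ w v ∈ G.posRoots) (hw' : -G.ρ w' v ∈ G.posRoots) :
    ¬ (cs.length (w * sα v) < cs.length w ↔ cs.length (w' * sα v) < cs.length w') := by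
  rcases hv.mem_posRoots_or_neg with hpos | hneg
  · rw [hsα.length_mul_lt_iff hpos, hsα.length_mul_lt_iff hpos]
    exact fun h => G.neg_notMem_posRoots hw (h.mpr hw')
  · rw [← hsα.apply_neg hv, hsα.length_mul_lt_iff hneg, hsα.length_mul_lt_iff hneg, map_neg,
      map_neg, neg_neg, neg_neg]
    exact fun h => G.neg_notMem_posRoots hw' (by simpa using h.mp hw)

theorem inversionSet_eq {A : Set W} (w : W) :
    G.inversionSet sα A w = {α ∈ G.posRoots | sα α ∈ cs.descentSet A w} := by
  ext α
  exact ⟨fun ⟨hα, htA, hneg⟩ => ⟨hα, htA, (hsα.length_mul_lt_iff hα w).mpr hneg⟩,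
    fun ⟨hα, htA, hlt⟩ => ⟨hα, htA, (hsα.length_mul_lt_iff hα w).mp hlt⟩⟩

variable {A : Set W} (hA : ∀ t ∈ A, cs.IsReflection t)
include hA

theorem descentSet_simple_mul {u : W} {i : B} (h : u⁻¹ * (cs.simple i * u) ∉ A) :
    cs.descentSet A (cs.simple i * u) = cs.descentSet A u := by
  ext t
  refine and_congr_right fun htA => ?_
  obtain ⟨v, hv, rfl⟩ := hsα.exists_mem_posRoots (hA t htA)
  have hne : sα (G.ρ u v) ≠ cs.simple i := by
    rw [hsα.apply_ρ hv.1]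
    rintro heq
    exact h (by rwa [← heq, show u⁻¹ * (u * sα v * u⁻¹ * u) = sα v by group])
  rw [hsα.length_mul_lt_iff hv, hsα.length_mul_lt_iff hv, G.ρ_mul_apply]
  refine G.neg_ρ_simple_mem_posRoots_iff (hv.1.ρ u) (fun h' => hne ?_) (fun h' => hne ?_)
  · rw [h', hsα.apply_b]
  · rw [← hsα.apply_neg (hv.1.ρ u), h', hsα.apply_b]

theorem descentSet_eq_of_reflTransGen {w w' : W} (h : Relation.ReflTransGen (cs.Adj A) w w') :
    cs.descentSet A w = cs.descentSet A w' := by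
  induction h with
  | refl => rfl
  | @tail y z _ hyz ih =>
    obtain ⟨⟨i, hi⟩, hyzA⟩ := hyz
    obtain rfl : z = cs.simple i * y := by rw [hi]; group
    rw [ih, hsα.descentSet_simple_mul hA hyzA]

theorem reflTransGen_of_descentSet_eq {w w' : W} (h : cs.descentSet A w = cs.descentSet A w') :
    Relation.ReflTransGen (cs.Adj A) w w' := by
  induction hn : cs.length (w' * w⁻¹) using Nat.strong_induction_on generalizing w with
  | _ n ih =>
  rcases eq_or_ne (w' * w⁻¹) 1 with hy | hy
  · rw [mul_inv_eq_one.mp hy]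
  obtain ⟨i, hi⟩ := cs.exists_rightDescent_of_ne_one hy
  -- `w` and `w'` send the root `w⁻¹ αᵢ` to `αᵢ > 0` and to `(w' w⁻¹) αᵢ < 0`.
  have hnotA : w⁻¹ * (cs.simple i * w) ∉ A := by
    intro htA
    have ht : sα (G.ρ w⁻¹ (G.b i)) = w⁻¹ * (cs.simple i * w) := by rw [hsα]; group
    refine hsα.not_length_mul_lt_iff ⟨w⁻¹, i, rfl⟩ (w := w) (w' := w') ?_ ?_ ?_
    · rw [← G.ρ_mul_apply, mul_inv_cancel, ρ_one_apply]
      exact G.b_mem_posRoots i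
    · rw [← G.ρ_mul_apply]
      exact G.neg_ρ_b_mem_posRoots hi
    · rw [ht]
      exact (and_iff_right htA).symm.trans ((Set.ext_iff.mp h _).trans (and_iff_right htA))
  have hstep : cs.Adj A w (cs.simple i * w) := ⟨⟨i, by group⟩, hnotA⟩
  refine .head hstep (ih _ ?_ (by rw [hsα.descentSet_simple_mul hA hnotA, h]) rfl)
  rw [mul_inv_rev, inv_simple, ← mul_assoc]
  have := cs.isRightDescent_iff.mp hi
  omega

theorem descentSet_eq_image (w : W) :
    cs.descentSet A w = sα '' G.inversionSet sα A w := by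
  rw [hsα.inversionSet_eq]
  ext t
  refine ⟨fun ht => ?_, fun ⟨v, ⟨_, hv⟩, hvt⟩ => hvt ▸ hv⟩
  obtain ⟨v, hv, rfl⟩ := hsα.exists_mem_posRoots (hA t ht.1)
  exact ⟨v, ⟨hv, ht⟩, rfl⟩

theorem descentSet_eq_iff_inversionSet_eq (w w' : W) :
    cs.descentSet A w = cs.descentSet A w' ↔
      G.inversionSet sα A w = G.inversionSet sα A w' := by
  refine ⟨fun h => ?_, fun h => ?_⟩
  · rw [hsα.inversionSet_eq, hsα.inversionSet_eq, h]
  · rw [hsα.descentSet_eq_image hA, hsα.descentSet_eq_image hA, h]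

end IsReflectionMap

end GeometricRepresentation

end CoxeterSystem

/-- For `A ⊆ T`, let `w ⌣_A w'` mean `w'w⁻¹ ∈ S` and `w⁻¹w' ∉ A`,
and let `∼_A` be its reflexive-transitive closure. Then
`w ∼_A w' ↔ D_A(w) = D_A(w') ↔ N_A(w) = N_A(w')`. -/
theorem descent_equivalence {B W : Type*} [Group W] {M : CoxeterMatrix B}
    (cs : CoxeterSystem M W)
    (V : Type*) [AddCommGroup V] [Module ℝ V] (b : Module.Basis B ℝ V)
    (Bil : LinearMap.BilinForm ℝ V)
    (hBil : ∀ i i' : B, Bil (b i) (b i') = - Real.cos (Real.pi / (M i i' : ℝ)))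
    (ρ : W →* V ≃ₗ[ℝ] V)
    (hρ : ∀ (i : B) (v : V), ρ (cs.simple i) v = v - (2 * Bil (b i) v) • b i)
    (sα : V → W)
    (hsα : ∀ (u : W) (k : B), sα (ρ u (b k)) = u * cs.simple k * u⁻¹)
    (Pos : Set V)
    (hPos : Pos = {v : V | (∃ u : W, ∃ k : B, ρ u (b k) = v) ∧ ∀ k : B, 0 ≤ b.repr v k})
    (A : Set W) (hA : ∀ t ∈ A, cs.IsReflection t)
    (NA : W → Set V)
    (hNA : ∀ w : W, NA w = {α ∈ Pos | sα α ∈ A ∧ -(ρ w α) ∈ Pos})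
    (w w' : W) :
    (Relation.ReflTransGen
        (fun u v : W => v * u⁻¹ ∈ Set.range cs.simple ∧ u⁻¹ * v ∉ A) w w' ↔
      {t ∈ A | cs.length (w * t) < cs.length w} =
        {t ∈ A | cs.length (w' * t) < cs.length w'}) ∧
    ({t ∈ A | cs.length (w * t) < cs.length w} =
        {t ∈ A | cs.length (w' * t) < cs.length w'} ↔
      NA w = NA w') := by
  let G : cs.GeometricRepresentation V := ⟨b, Bil, hBil, ρ, hρ⟩
  have hsαG : G.IsReflectionMap sα := hsα
  subst hPos
  rw [hNA, hNA]
  exact ⟨⟨hsαG.descentSet_eq_of_reflTransGen hA, hsαG.reflTransGen_of_descentSet_eq hA⟩,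
    hsαG.descentSet_eq_iff_inversionSet_eq hA w w'⟩
end

section
/- Let (W,S) be a Coxeter system with reflections T. Suppose A ⊆ T satisfies: there exist subsets S₁, S₂ of S with A = S₁ ∪ (∪_{s∈S₂} C(s)), where C(s) is the conjugacy class of s in W. Then A is nice: for every r ∈ A and w ∈ W with w⁻¹ r w ∉ A, one has D_A(rw) = D_A(w). -/
/-!
For `A` as in the statement, the part of `A` outside `S₁` is a union of full conjugacy classes,
so `w⁻¹ r w ∉ A` forces `r` to be a simple reflection `s`, and then no `t ∈ A` has `w t w⁻¹ = s`.
It remains to see that for a reflection `t` with `w t w⁻¹ ≠ s`, `t` is a right descent of `s w`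
exactly when it is one of `w`. This comes from the signed reflection representation
(Björner–Brenti, §1.4): `s` acts on `W × ℤˣ` by `(t, ε) ↦ (s t s, ±ε)`, the sign flipping
exactly when `t = s`. Extended to `W`, it defines a sign cocycle `η(w, t)` with
`η(s w, t) = η(w, t)` unless `w t w⁻¹ = s`, and `η(w, t) = -1` exactly when `ℓ(w t) < ℓ(w)`:
a `-1` forces `t` into the right inversion sequence of a reduced word for `w`, and
`η(t, t) = -1` gives the converse.
-/

theorem mul_mul_inv_eq_iff_eq_inv_mul_mul {G : Type*} [Group G] (g t u : G) :
    g * t * g⁻¹ = u ↔ t = g⁻¹ * u * g := by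
  rw [mul_inv_eq_iff_eq_mul, mul_assoc, eq_inv_mul_iff_mul_eq]

namespace CoxeterSystem

open scoped Classical

variable {B W : Type*} [Group W] {M : CoxeterMatrix B} (cs : CoxeterSystem M W)

theorem simple_mul_mul_simple_eq_iff (i : B) (t u : W) :
    cs.simple i * t * cs.simple i = u ↔ t = cs.simple i * u * cs.simple i := by
  simpa only [inv_simple] using mul_mul_inv_eq_iff_eq_inv_mul_mul (cs.simple i) t u

theorem simple_mul_mul_simple_eq_simple_iff (i : B) (t : W) :
    cs.simple i * t * cs.simple i = cs.simple i ↔ t = cs.simple i := by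
  rw [simple_mul_mul_simple_eq_iff, simple_mul_simple_cancel_right]

theorem inv_pow_mul_simple (i j : B) (k : ℕ) :
    ((cs.simple i * cs.simple j) ^ k)⁻¹ * cs.simple j =
      cs.simple j * (cs.simple i * cs.simple j) ^ k := by
  have h : cs.simple j * (cs.simple i * cs.simple j) ^ k * (cs.simple j)⁻¹ =
      ((cs.simple i * cs.simple j) ^ k)⁻¹ := by
    rw [← conj_pow, ← inv_pow]
    simp [mul_assoc]
  rw [← h]
  simp [mul_assoc]

theorem conj_pow_eq_simple_mul_pow_iff (i j : B) (k e : ℕ) (t : W) :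
    (cs.simple i * cs.simple j) ^ k * t * ((cs.simple i * cs.simple j) ^ k)⁻¹ =
        cs.simple j * (cs.simple i * cs.simple j) ^ e ↔
      t = cs.simple j * (cs.simple i * cs.simple j) ^ (2 * k + e) := by
  rw [mul_mul_inv_eq_iff_eq_inv_mul_mul, ← mul_assoc, inv_pow_mul_simple, mul_assoc, mul_assoc,
    ← pow_add, ← pow_add, add_comm e, ← add_assoc, ← two_mul]

noncomputable def signedConjPerm (i : B) : Equiv.Perm (W × ℤˣ) :=
  Function.Involutive.toPerm
    (fun p => (cs.simple i * p.1 * cs.simple i, p.2 * if p.1 = cs.simple i then -1 else 1)) <| by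
    rintro ⟨t, ε⟩
    dsimp only
    rw [simple_mul_mul_simple_eq_simple_iff]
    split_ifs <;> simp [mul_assoc]

theorem signedConjPerm_apply (i : B) (t : W) (ε : ℤˣ) :
    cs.signedConjPerm i (t, ε) =
      (cs.simple i * t * cs.simple i, ε * if t = cs.simple i then -1 else 1) := rfl

theorem signedConjPerm_mul_apply (i j : B) (t : W) (ε : ℤˣ) :
    (cs.signedConjPerm i * cs.signedConjPerm j) (t, ε) =
      ((cs.simple i * cs.simple j) * t * (cs.simple i * cs.simple j)⁻¹,
        ε * ((if t = cs.simple j then -1 else 1) *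
          if t = cs.simple j * (cs.simple i * cs.simple j) then -1 else 1)) := by
  rw [Equiv.Perm.mul_apply, signedConjPerm_apply, signedConjPerm_apply,
    simple_mul_mul_simple_eq_iff, mul_assoc ε]
  simp only [mul_inv_rev, inv_simple, mul_assoc]

theorem signedConjPerm_mul_pow_apply (i j : B) (k : ℕ) (t : W) (ε : ℤˣ) :
    ((cs.signedConjPerm i * cs.signedConjPerm j) ^ k) (t, ε) =
      ((cs.simple i * cs.simple j) ^ k * t * ((cs.simple i * cs.simple j) ^ k)⁻¹,
        ε * ∏ n ∈ Finset.range (2 * k),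
          if t = cs.simple j * (cs.simple i * cs.simple j) ^ n then -1 else 1) := by
  induction k with
  | zero => simp
  | succ k ih =>
    have h₀ := cs.conj_pow_eq_simple_mul_pow_iff i j k 0 t
    have h₁ := cs.conj_pow_eq_simple_mul_pow_iff i j k 1 t
    rw [pow_zero, mul_one] at h₀
    rw [pow_one] at h₁
    rw [pow_succ', Equiv.Perm.mul_apply, ih, signedConjPerm_mul_apply, h₀, h₁]
    ext
    · simp only [pow_succ', mul_inv_rev, mul_assoc]
    · simp only [Nat.mul_succ, Finset.prod_range_succ, add_zero, mul_assoc]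

theorem isLiftable_signedConjPerm : M.IsLiftable cs.signedConjPerm := by
  intro i j
  -- the sign flips at `s_j (s_i s_j)^n`, `n < 2m`, come in pairs since this is `m`-periodic in `n`
  ext ⟨t, ε⟩ : 1
  have periodic (n : ℕ) : cs.simple j * (cs.simple i * cs.simple j) ^ (M i j + n) =
      cs.simple j * (cs.simple i * cs.simple j) ^ n := by
    rw [pow_add, simple_mul_simple_pow, one_mul]
  rw [signedConjPerm_mul_pow_apply, two_mul, Finset.prod_range_add]
  simp [periodic, simple_mul_simple_pow, Int.units_mul_self]

noncomputable def signedConjRep : W →* Equiv.Perm (W × ℤˣ) :=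
  cs.lift ⟨cs.signedConjPerm, cs.isLiftable_signedConjPerm⟩

theorem signedConjRep_simple (i : B) : cs.signedConjRep (cs.simple i) = cs.signedConjPerm i :=
  cs.lift_apply_simple cs.isLiftable_signedConjPerm i

theorem exists_signedConjRep_apply (w : W) :
    ∃ σ : W → ℤˣ, ∀ t ε, cs.signedConjRep w (t, ε) = (w * t * w⁻¹, ε * σ t) := by
  induction w using cs.simple_induction with
  | simple i =>
    exact ⟨fun t => if t = cs.simple i then -1 else 1, fun t ε => by
      rw [signedConjRep_simple, signedConjPerm_apply, inv_simple]⟩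
  | one => exact ⟨1, by simp⟩
  | mul u v hu hv =>
    obtain ⟨σ, hσ⟩ := hu
    obtain ⟨τ, hτ⟩ := hv
    exact ⟨fun t => τ t * σ (v * t * v⁻¹), fun t ε => by simp [hσ, hτ, mul_assoc]⟩

noncomputable def reflSign (w t : W) : ℤˣ := (cs.signedConjRep w (t, 1)).2

theorem signedConjRep_apply (w t : W) (ε : ℤˣ) :
    cs.signedConjRep w (t, ε) = (w * t * w⁻¹, ε * cs.reflSign w t) := by
  obtain ⟨σ, hσ⟩ := cs.exists_signedConjRep_apply w
  rw [reflSign, hσ, hσ, one_mul]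

theorem reflSign_one (t : W) : cs.reflSign 1 t = 1 := by
  simp [reflSign]

theorem reflSign_simple (i : B) (t : W) :
    cs.reflSign (cs.simple i) t = if t = cs.simple i then -1 else 1 := by
  rw [reflSign, signedConjRep_simple, signedConjPerm_apply, one_mul]

theorem reflSign_mul (u v t : W) :
    cs.reflSign (u * v) t = cs.reflSign u (v * t * v⁻¹) * cs.reflSign v t := by
  rw [reflSign, map_mul, Equiv.Perm.mul_apply, signedConjRep_apply, signedConjRep_apply, one_mul,
    mul_comm]

theorem IsReflection.reflSign_self {cs : CoxeterSystem M W} {t : W} (ht : cs.IsReflection t) :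
    cs.reflSign t t = -1 := by
  obtain ⟨u, i, rfl⟩ := ht
  have hconj : u⁻¹ * (u * cs.simple i * u⁻¹) * u⁻¹⁻¹ = cs.simple i := by group
  have hinv : cs.reflSign u (cs.simple i) * cs.reflSign u⁻¹ (u * cs.simple i * u⁻¹) = 1 := by
    have h := cs.reflSign_mul u u⁻¹ (u * cs.simple i * u⁻¹)
    rwa [mul_inv_cancel, reflSign_one, hconj, eq_comm] at h
  have hconj' : cs.simple i * u⁻¹ * (u * cs.simple i * u⁻¹) * (cs.simple i * u⁻¹)⁻¹ =
      cs.simple i := by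
    simp [mul_assoc]
  calc cs.reflSign (u * cs.simple i * u⁻¹) (u * cs.simple i * u⁻¹)
      = cs.reflSign u (cs.simple i) *
          (cs.reflSign (cs.simple i) (cs.simple i) * cs.reflSign u⁻¹ (u * cs.simple i * u⁻¹)) := by
        rw [mul_assoc u, reflSign_mul, reflSign_mul, ← mul_assoc u, hconj', hconj]
    _ = -1 := by rw [reflSign_simple, if_pos rfl, neg_one_mul, mul_neg, hinv]

theorem mem_rightInvSeq_of_reflSign_eq_neg_one {ω : List B} {t : W}
    (h : cs.reflSign (cs.wordProd ω) t = -1) : t ∈ cs.rightInvSeq ω := by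
  induction ω with
  | nil => simp [reflSign_one] at h
  | cons i ω ih =>
    rw [wordProd_cons, reflSign_mul, reflSign_simple] at h
    rw [rightInvSeq, List.mem_cons, ← mul_mul_inv_eq_iff_eq_inv_mul_mul]
    by_cases hi : cs.wordProd ω * t * (cs.wordProd ω)⁻¹ = cs.simple i
    · exact Or.inl hi
    · rw [if_neg hi, one_mul] at h
      exact Or.inr (ih h)

theorem isRightInversion_of_reflSign_eq_neg_one {w t : W} (h : cs.reflSign w t = -1) :
    cs.IsRightInversion w t := by
  obtain ⟨ω, hω, rfl⟩ := cs.exists_isReduced w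
  exact cs.isRightInversion_of_mem_rightInvSeq hω (cs.mem_rightInvSeq_of_reflSign_eq_neg_one h)

theorem IsReflection.length_mul_lt_iff_reflSign_eq_neg_one {cs : CoxeterSystem M W} {t : W}
    (ht : cs.IsReflection t) (w : W) : cs.length (w * t) < cs.length w ↔ cs.reflSign w t = -1 := by
  refine ⟨fun hlt => ?_, fun h => (cs.isRightInversion_of_reflSign_eq_neg_one h).2⟩
  refine (Int.units_eq_one_or _).resolve_left fun hw => ?_
  have hwt : cs.reflSign (w * t) t = -1 := by
    rw [reflSign_mul, mul_inv_cancel_right, hw, one_mul, ht.reflSign_self]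
  have := (cs.isRightInversion_of_reflSign_eq_neg_one hwt).2
  rw [mul_assoc, ht.mul_self, mul_one] at this
  exact lt_asymm hlt this

theorem IsReflection.length_simple_mul_mul_lt_iff {cs : CoxeterSystem M W} {t : W}
    (ht : cs.IsReflection t) {i : B} {w : W} (hne : w * t * w⁻¹ ≠ cs.simple i) :
    cs.length (cs.simple i * w * t) < cs.length (cs.simple i * w) ↔
      cs.length (w * t) < cs.length w := by
  rw [ht.length_mul_lt_iff_reflSign_eq_neg_one, ht.length_mul_lt_iff_reflSign_eq_neg_one,
    reflSign_mul, reflSign_simple, if_neg hne, one_mul]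

theorem sep_length_simple_mul_mul_lt_eq {A : Set W} (hA : ∀ t ∈ A, cs.IsReflection t) {i : B}
    {w : W} (hw : w⁻¹ * cs.simple i * w ∉ A) :
    {t ∈ A | cs.length (cs.simple i * w * t) < cs.length (cs.simple i * w)} =
      {t ∈ A | cs.length (w * t) < cs.length w} := by
  ext t
  refine and_congr_right fun htA => (hA t htA).length_simple_mul_mul_lt_iff fun heq => hw ?_
  rwa [← (mul_mul_inv_eq_iff_eq_inv_mul_mul w t _).mp heq]

end CoxeterSystem

/-- If `A = S₁ ∪ (⋃_{s ∈ S₂} C(s))` for subsets `S₁, S₂` of `S`,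
then `A` is nice: for every `r ∈ A` and `w ∈ W` with `w⁻¹ r w ∉ A`,
`D_A(rw) = D_A(w)`. -/
theorem union_of_simples_and_classes_is_nice {B W : Type*} [Group W] {M : CoxeterMatrix B}
    (cs : CoxeterSystem M W) (S₁ S₂ : Set B) (A : Set W)
    (hA : A = cs.simple '' S₁ ∪ ⋃ i ∈ S₂, {x : W | ∃ w : W, x = w * cs.simple i * w⁻¹})
    (r : W) (hr : r ∈ A) (w : W) (hrw : w⁻¹ * r * w ∉ A) :
    {t ∈ A | cs.length (r * w * t) < cs.length (r * w)} =
      {t ∈ A | cs.length (w * t) < cs.length w} := by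
  have hrefl : ∀ t ∈ A, cs.IsReflection t := by
    rw [hA]
    rintro t (⟨i, -, rfl⟩ | ht)
    · exact cs.isReflection_simple i
    · obtain ⟨i, -, u, rfl⟩ := Set.mem_iUnion₂.mp ht
      exact ⟨u, i, rfl⟩
  rw [hA] at hr
  obtain ⟨i, -, rfl⟩ | hr := hr
  · exact cs.sep_length_simple_mul_mul_lt_eq hrefl hrw
  · obtain ⟨i, hi, u, rfl⟩ := Set.mem_iUnion₂.mp hr
    refine absurd ?_ hrw
    rw [hA]
    exact Or.inr (Set.mem_biUnion hi ⟨w⁻¹ * u, by group⟩)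
end

section
/- Let W be the dihedral group with S = {s,t}, m(s,t) = 2m, m ≥ 2, and A = {s,t,sts}. In the group ring ZW, with d_t = Σ_{i=1}^{m-1}((st)^i + (ts)^{i-1}t), d_s = s, d_{s̄} = w₀s, d_A = w₀, and d_{t̄} = Σ_{i=1}^{m-1}((st)^i s + (ts)^i), the product satisfies d_t·d_t = (m-1)(1 + d_A + d_s + d_{s̄}) + (m-2)(d_t + d_{t̄}). -/
/-!
Put `a = st`, `P = ∑_{0<i<m} aⁱ` and `P' = ∑_{0<i<m} a⁻ⁱ`, so that `d_t = P + P' s` and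
`d_t̄ = P s + P'`. Conjugation by `s` swaps `P` and `P'`, hence `s d_t = d_t` and
`d_t² = (P + P') d_t`. Since `a` has order dividing `2m`, the sum `Z = ∑_{i<2m} aⁱ` absorbs powers
of `a` and equals `1 + w₀ + P + P'`, while multiplication by `w₀ = aᵐ` sends `aⁱ` to `a^{i-m}`, so
`w₀ P = P'`. Therefore `d_t² = Z d_t - d_t - w₀ d_t = (m - 1)(Z + Z s) - (d_t + d_t̄)`, and
`Z + Z s = 1 + w₀ + s + w₀ s + d_t + d_t̄`.
-/

open Finset MonoidAlgebra

section PowSums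

variable (k : Type*) {G : Type*} [Semiring k]

noncomputable def powSum [Monoid G] (a : G) (n : ℕ) : MonoidAlgebra k G :=
  ∑ i ∈ range n, of k G (a ^ i)

noncomputable def arcSum [Monoid G] (a : G) (m : ℕ) : MonoidAlgebra k G :=
  ∑ i ∈ Icc 1 (m - 1), of k G (a ^ i)

variable {k}

section Monoid

variable [Monoid G] {a : G} {n : ℕ}

theorem powSum_eq_one_add_arcSum {m : ℕ} (hm : 1 ≤ m) : powSum k a m = 1 + arcSum k a m := by
  obtain ⟨m, rfl⟩ := Nat.exists_eq_add_of_le' hm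
  rw [powSum, sum_range_succ', pow_zero, map_one, add_comm, arcSum, Nat.add_sub_cancel,
    range_eq_Ico, sum_Ico_add' (fun i => of k G (a ^ i)), zero_add, Ico_add_one_right_eq_Icc]

theorem powSum_add (m n : ℕ) :
    powSum k a (m + n) = powSum k a m + of k G (a ^ m) * powSum k a n := by
  simp only [powSum, sum_range_add, mul_sum, ← map_mul, pow_add]

theorem powSum_mul_of_self (ha : a ^ n = 1) : powSum k a n * of k G a = powSum k a n := by
  cases n with
  | zero => simp [powSum]
  | succ n =>
    simp only [powSum, sum_mul, ← map_mul, ← pow_succ]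
    rw [sum_range_succ, ha, ← pow_zero a]
    exact (sum_range_succ' (fun i => of k G (a ^ i)) n).symm

theorem powSum_mul_of_pow (ha : a ^ n = 1) (i : ℕ) :
    powSum k a n * of k G (a ^ i) = powSum k a n := by
  induction i with
  | zero => rw [pow_zero, map_one, mul_one]
  | succ i ih => rw [pow_succ, map_mul, ← mul_assoc, ih, powSum_mul_of_self ha]

end Monoid

section Group

variable [Group G] {a : G} {n : ℕ}

theorem powSum_mul_of_inv_pow (ha : a ^ n = 1) (i : ℕ) :
    powSum k a n * of k G (a⁻¹ ^ i) = powSum k a n := by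
  conv_lhs => rw [← powSum_mul_of_pow ha i]
  rw [mul_assoc, ← map_mul, inv_pow, mul_inv_cancel, map_one, mul_one]

theorem powSum_mul_arcSum (ha : a ^ n = 1) (m : ℕ) :
    powSum k a n * arcSum k a m = (m - 1) • powSum k a n := by
  rw [arcSum, mul_sum, sum_congr rfl fun i _ => powSum_mul_of_pow ha i, sum_const,
    Nat.card_Icc, Nat.add_sub_cancel]

theorem powSum_mul_arcSum_inv (ha : a ^ n = 1) (m : ℕ) :
    powSum k a n * arcSum k a⁻¹ m = (m - 1) • powSum k a n := by
  rw [arcSum, mul_sum, sum_congr rfl fun i _ => powSum_mul_of_inv_pow ha i, sum_const,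
    Nat.card_Icc, Nat.add_sub_cancel]

theorem of_pow_mul_arcSum {m : ℕ} (ha : a ^ (2 * m) = 1) :
    of k G (a ^ m) * arcSum k a m = arcSum k a⁻¹ m := by
  rw [arcSum, arcSum, mul_sum]
  refine sum_nbij' (m - ·) (m - ·) ?_ ?_ ?_ ?_ ?_
  any_goals intro i hi; simp only [mem_Icc] at hi ⊢; omega
  intro i hi
  have hi : i ≤ m := by simp only [mem_Icc] at hi; omega
  have h : a ^ (m + i) * a ^ (m - i) = 1 := by
    rw [← pow_add, show m + i + (m - i) = 2 * m by omega, ha]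
  rw [← map_mul, ← pow_add, inv_pow, eq_inv_of_mul_eq_one_left h]

theorem of_mul_arcSum (g x : G) (m : ℕ) :
    of k G g * arcSum k x m = arcSum k (g * x * g⁻¹) m * of k G g := by
  simp only [arcSum, mul_sum, sum_mul, ← map_mul, conj_pow, inv_mul_cancel_right]

theorem powSum_two_mul {m : ℕ} (hm : 1 ≤ m) (ha : a ^ (2 * m) = 1) :
    powSum k a (2 * m) = 1 + of k G (a ^ m) + arcSum k a m + arcSum k a⁻¹ m := by
  rw [two_mul, powSum_add, powSum_eq_one_add_arcSum hm, mul_add, mul_one,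
    of_pow_mul_arcSum ha]
  abel

end Group

end PowSums

section Dihedral

variable (k : Type*) {W : Type*} [Group W]

noncomputable def dihedralDt [Semiring k] (s t : W) (m : ℕ) : MonoidAlgebra k W :=
  arcSum k (s * t) m + arcSum k (t * s) m * of k W s

noncomputable def dihedralDtbar [Semiring k] (s t : W) (m : ℕ) : MonoidAlgebra k W :=
  arcSum k (s * t) m * of k W s + arcSum k (t * s) m

variable {k} {s t : W} {m : ℕ}

theorem mul_rev_eq_inv_of_mul_self_eq_one (hs : s * s = 1) (ht : t * t = 1) :
    t * s = (s * t)⁻¹ := by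
  rw [mul_inv_rev, inv_eq_of_mul_eq_one_right hs, inv_eq_of_mul_eq_one_right ht]

theorem of_mul_dihedralDt [Semiring k] (hs : s * s = 1) :
    of k W s * dihedralDt k s t m = dihedralDt k s t m := by
  have hs' : s⁻¹ = s := inv_eq_of_mul_eq_one_right hs
  have h_st : s * (s * t) * s⁻¹ = t * s := by rw [hs', ← mul_assoc, hs, one_mul]
  have h_ts : s * (t * s) * s⁻¹ = s * t := by rw [hs', mul_assoc, mul_assoc, hs, mul_one]
  rw [dihedralDt, mul_add, ← mul_assoc, of_mul_arcSum, of_mul_arcSum, h_st, h_ts, mul_assoc,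
    ← map_mul, hs, map_one, mul_one, add_comm]

theorem of_pow_mul_dihedralDt [Semiring k] (hs : s * s = 1) (ht : t * t = 1)
    (hst : (s * t) ^ (2 * m) = 1) :
    of k W ((s * t) ^ m) * dihedralDt k s t m = dihedralDtbar k s t m := by
  have hinv : (s * t)⁻¹ ^ (2 * m) = 1 := by rw [inv_pow, hst, inv_one]
  have hpow : (s * t) ^ m = (s * t)⁻¹ ^ m := by
    rw [inv_pow, eq_inv_iff_mul_eq_one, ← pow_add, ← two_mul, hst]
  rw [dihedralDt, dihedralDtbar, mul_add, of_pow_mul_arcSum hst, ← mul_assoc, hpow,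
    mul_rev_eq_inv_of_mul_self_eq_one hs ht, of_pow_mul_arcSum hinv, inv_inv, add_comm]

theorem powSum_mul_dihedralDt [Semiring k] (hs : s * s = 1) (ht : t * t = 1)
    (hst : (s * t) ^ (2 * m) = 1) :
    powSum k (s * t) (2 * m) * dihedralDt k s t m =
      (m - 1) • (powSum k (s * t) (2 * m) + powSum k (s * t) (2 * m) * of k W s) := by
  rw [dihedralDt, mul_add, ← mul_assoc, powSum_mul_arcSum hst,
    mul_rev_eq_inv_of_mul_self_eq_one hs ht, powSum_mul_arcSum_inv hst, smul_mul_assoc, smul_add]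

theorem dihedralDt_mul_self [Ring k] (hs : s * s = 1) (ht : t * t = 1) (hm : 1 ≤ m)
    (hst : (s * t) ^ (2 * m) = 1) :
    dihedralDt k s t m * dihedralDt k s t m =
      ((m : ℤ) - 1) • (1 + of k W ((s * t) ^ m) + of k W s + of k W ((s * t) ^ m * s)) +
        ((m : ℤ) - 2) • (dihedralDt k s t m + dihedralDtbar k s t m) := by
  have h_left : dihedralDt k s t m * dihedralDt k s t m =
      (arcSum k (s * t) m + arcSum k (t * s) m) * dihedralDt k s t m := by
    conv_lhs => arg 1; rw [dihedralDt]
    rw [add_mul, mul_assoc, of_mul_dihedralDt hs, add_mul]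
  have h_arcs : arcSum k (s * t) m + arcSum k (t * s) m =
      powSum k (s * t) (2 * m) - 1 - of k W ((s * t) ^ m) := by
    rw [powSum_two_mul hm hst, mul_rev_eq_inv_of_mul_self_eq_one hs ht]
    abel
  have h_cycle : powSum k (s * t) (2 * m) + powSum k (s * t) (2 * m) * of k W s =
      1 + of k W ((s * t) ^ m) + of k W s + of k W ((s * t) ^ m * s) +
        (dihedralDt k s t m + dihedralDtbar k s t m) := by
    rw [powSum_two_mul hm hst, ← mul_rev_eq_inv_of_mul_self_eq_one hs ht, dihedralDtbar,
      dihedralDt, map_mul]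
    noncomm_ring
  have h_smul : ((m - 1 : ℕ) : ℤ) = (m : ℤ) - 1 := by omega
  rw [h_left, h_arcs, sub_mul, sub_mul, one_mul, powSum_mul_dihedralDt hs ht hst,
    of_pow_mul_dihedralDt hs ht hst, ← natCast_zsmul, h_smul, h_cycle]
  module

end Dihedral

theorem dihedral_dt_squared_general {B W : Type*} [Group W] {M : CoxeterMatrix B}
    (cs : CoxeterSystem M W) (i j : B)
    (m : ℕ) (hm : 2 ≤ m) (hM : M i j = 2 * m)
    (s t : W) (hs : s = cs.simple i) (ht : t = cs.simple j)
    (w₀ : W) (hw₀ : w₀ = (s * t) ^ m)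
    (ds dsbar dA dt dtbar : MonoidAlgebra ℤ W)
    (hds : ds = MonoidAlgebra.of ℤ W s)
    (hdsbar : dsbar = MonoidAlgebra.of ℤ W (w₀ * s))
    (hdA : dA = MonoidAlgebra.of ℤ W w₀)
    (hdt : dt = ∑ k ∈ Finset.Icc 1 (m - 1),
      (MonoidAlgebra.of ℤ W ((s * t) ^ k) + MonoidAlgebra.of ℤ W ((t * s) ^ (k - 1) * t)))
    (hdtbar : dtbar = ∑ k ∈ Finset.Icc 1 (m - 1),
      (MonoidAlgebra.of ℤ W ((s * t) ^ k * s) + MonoidAlgebra.of ℤ W ((t * s) ^ k))) :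
    dt * dt = ((m : ℤ) - 1) • (1 + dA + ds + dsbar) + ((m : ℤ) - 2) • (dt + dtbar) := by
  have hss : s * s = 1 := hs ▸ cs.simple_mul_simple_self i
  have htt : t * t = 1 := ht ▸ cs.simple_mul_simple_self j
  have hst : (s * t) ^ (2 * m) = 1 := by rw [hs, ht, ← hM]; exact cs.simple_mul_simple_pow i j
  have hdt' : dt = dihedralDt ℤ s t m := by
    rw [hdt, dihedralDt, arcSum, arcSum, sum_mul, ← sum_add_distrib]
    refine sum_congr rfl fun n hn => ?_
    obtain ⟨n, rfl⟩ := Nat.exists_eq_add_of_le' (mem_Icc.mp hn).1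
    rw [Nat.add_sub_cancel, ← map_mul, pow_succ (t * s) n, mul_assoc, mul_assoc, hss, mul_one]
  have hdtbar' : dtbar = dihedralDtbar ℤ s t m := by
    simp only [hdtbar, dihedralDtbar, arcSum, sum_mul, ← sum_add_distrib, map_mul]
  rw [hdt', hdtbar', hds, hdsbar, hdA, hw₀]
  exact dihedralDt_mul_self hss htt (by omega) hst

/-- In the dihedral group of order `4m` (`m ≥ 2`) with `A = {s,t,sts}`,
in `ℤW` one has `d_t · d_t = (m-1)(1 + d_A + d_s + d_s̄) + (m-2)(d_t + d_t̄)`, where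
`d_s = s`, `d_s̄ = w₀ s`, `d_A = w₀`, `d_t = Σ_{k=1}^{m-1} ((st)^k + (ts)^{k-1} t)` and
`d_t̄ = Σ_{k=1}^{m-1} ((st)^k s + (ts)^k)`. -/
theorem dihedral_dt_squared {B W : Type*} [Group W] {M : CoxeterMatrix B}
    (cs : CoxeterSystem M W) (i j : B) (hij : i ≠ j) (hB : ∀ k : B, k = i ∨ k = j)
    (m : ℕ) (hm : 2 ≤ m) (hM : M i j = 2 * m)
    (s t : W) (hs : s = cs.simple i) (ht : t = cs.simple j)
    (w₀ : W) (hw₀ : w₀ = (s * t) ^ m)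
    (ds dsbar dA dt dtbar : MonoidAlgebra ℤ W)
    (hds : ds = MonoidAlgebra.of ℤ W s)
    (hdsbar : dsbar = MonoidAlgebra.of ℤ W (w₀ * s))
    (hdA : dA = MonoidAlgebra.of ℤ W w₀)
    (hdt : dt = ∑ k ∈ Finset.Icc 1 (m - 1),
      (MonoidAlgebra.of ℤ W ((s * t) ^ k) + MonoidAlgebra.of ℤ W ((t * s) ^ (k - 1) * t)))
    (hdtbar : dtbar = ∑ k ∈ Finset.Icc 1 (m - 1),
      (MonoidAlgebra.of ℤ W ((s * t) ^ k * s) + MonoidAlgebra.of ℤ W ((t * s) ^ k))) :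
    dt * dt = ((m : ℤ) - 1) • (1 + dA + ds + dsbar) + ((m : ℤ) - 2) • (dt + dtbar) :=
  dihedral_dt_squared_general cs i j m hm hM s t hs ht w₀ hw₀ ds dsbar dA dt dtbar hds hdsbar hdA
    hdt hdtbar
end
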